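/- arXiv:2410.21232 — 3 statements merged into one kernel-verified Lean document; each statement's English description precedes it below -/
import Mathlib

section
/- Let g : ℝ → ℝ be continuously differentiable with g(θ) > 0 for all θ, and let ψ : ℝ × ℝ → ℝ be twice continuously differentiable with ψ(0,θ) = θ and ∂ψ/∂c(c,θ) = 1/g(ψ(c,θ)) for all (c,θ). Define φ : ℝ³ → ℝ³ by φ(u,s,θ) = (u, s, ψ(us/2, θ)). Then φ pulls back the 1-form (1/2)(u ds − s du) + g(θ) dθ to the 1-form u ds + g(θ) dθ; explicitly, for every p = (u,s,θ) and every v = (v_u, v_s, v_θ) ∈ ℝ³, writing (u', s', θ') = φ(p) and (w_u, w_s, w_θ) = Dφ(p)v, one has (1/2)(u' w_s − s' w_u) + g(θ') w_θ = u v_s + g(θ) v_θ. -/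
/-! With `G` a primitive of `g`, the flow equation `∂ψ/∂c = 1 / g ∘ ψ` says that
`G (ψ (c, θ)) = G θ + c`: the flow moves the level of `G` at unit speed.
Differentiating this identity gives `g (ψ (c, θ)) · Dψ (a, b) = a + g θ · b`, so along `φ`
the term `g(θ') dθ'` pulls back to `(s du + u ds) / 2 + g(θ) dθ`,
which together with `(u ds − s du) / 2` is `u ds + g(θ) dθ`. -/

theorem antideriv_comp_eq_add_of_hasDerivAt_one_div {g G γ : ℝ → ℝ}
    (hG : ∀ x, HasDerivAt G (g x) x) (hg : ∀ c, g (γ c) ≠ 0)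
    (hγ : ∀ c, HasDerivAt γ (1 / g (γ c)) c) (c : ℝ) :
    G (γ c) = G (γ 0) + c := by
  have hderiv : ∀ t, HasDerivAt (fun t => G (γ t) - t) 0 t := fun t => by
    have := ((hG (γ t)).comp t (hγ t)).sub (hasDerivAt_id t)
    rwa [mul_one_div_cancel (hg t), sub_self] at this
  have := is_const_of_deriv_eq_zero (fun t => (hderiv t).differentiableAt)
    (fun t => (hderiv t).deriv) c 0
  simp only [sub_zero] at this
  linarith

theorem DifferentiableAt.hasDerivAt_partial_fst {ψ : ℝ × ℝ → ℝ} {c θ : ℝ}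
    (hψ : DifferentiableAt ℝ ψ (c, θ)) :
    HasDerivAt (fun c' => ψ (c', θ)) (fderiv ℝ ψ (c, θ) (1, 0)) c :=
  hψ.hasFDerivAt.comp_hasDerivAt c ((hasDerivAt_id c).prodMk (hasDerivAt_const c θ))

theorem mul_fderiv_eq_of_antideriv_comp_eq_add {g G : ℝ → ℝ} {ψ : ℝ × ℝ → ℝ}
    (hG : ∀ x, HasDerivAt G (g x) x) (hGψ : ∀ q, G (ψ q) = G q.2 + q.1)
    {q : ℝ × ℝ} (hψ : DifferentiableAt ℝ ψ q) (w : ℝ × ℝ) :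
    g (ψ q) * fderiv ℝ ψ q w = w.1 + g q.2 * w.2 := by
  have hcomp := (hG (ψ q)).comp_hasFDerivAt q hψ.hasFDerivAt
  rw [show G ∘ ψ = fun q => G q.2 + q.1 from funext hGψ] at hcomp
  have hsum := ((hG q.2).comp_hasFDerivAt q hasFDerivAt_snd).add (hasFDerivAt_fst (𝕜 := ℝ))
  have := congrArg (· w) (hcomp.unique hsum)
  simpa [add_comm] using this

theorem fderiv_normalForm_apply {ψ : ℝ × ℝ → ℝ} (hψ : Differentiable ℝ ψ)
    (p v : ℝ × ℝ × ℝ) :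
    fderiv ℝ (fun q : ℝ × ℝ × ℝ => (q.1, q.2.1, ψ (q.1 * q.2.1 / 2, q.2.2))) p v
      = (v.1, v.2.1, fderiv ℝ ψ (p.1 * p.2.1 / 2, p.2.2)
          ((p.1 * v.2.1 + p.2.1 * v.1) / 2, v.2.2)) := by
  simp_rw [div_eq_mul_inv]
  have hsnd := hasFDerivAt_snd (𝕜 := ℝ) (p := p)
  have hinner : HasFDerivAt (fun q : ℝ × ℝ × ℝ => (q.1 * q.2.1 * 2⁻¹, q.2.2)) _ p :=
    ((hasFDerivAt_fst.mul hsnd.fst).mul_const 2⁻¹).prodMk hsnd.snd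
  have hD :
      HasFDerivAt (fun q : ℝ × ℝ × ℝ => (q.1, q.2.1, ψ (q.1 * q.2.1 * 2⁻¹, q.2.2))) _ p :=
    hasFDerivAt_fst.prodMk (hsnd.fst.prodMk ((hψ _).hasFDerivAt.comp p hinner))
  rw [hD.fderiv]
  simp only [ContinuousLinearMap.prod_apply, ContinuousLinearMap.coe_fst',
    ContinuousLinearMap.comp_apply, ContinuousLinearMap.coe_snd',
    add_apply, smul_apply, smul_eq_mul]
  ring_nf

/-- The normal-form map `φ(u,s,θ) = (u, s, ψ(us/2, θ))`, where `ψ` is the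
flow of the vector field `(1/g(θ)) ∂_θ`, pulls back the 1-form
`(1/2)(u ds − s du) + g(θ) dθ` to `u ds + g(θ) dθ`. -/
theorem pullback_normal_form
    (g : ℝ → ℝ) (hg : ContDiff ℝ 1 g) (hgpos : ∀ θ : ℝ, 0 < g θ)
    (ψ : ℝ × ℝ → ℝ) (hψ : ContDiff ℝ 2 ψ)
    (hψ0 : ∀ θ : ℝ, ψ (0, θ) = θ)
    (hψc : ∀ c θ : ℝ, fderiv ℝ ψ (c, θ) (1, 0) = 1 / g (ψ (c, θ)))
    (φ : ℝ × ℝ × ℝ → ℝ × ℝ × ℝ)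
    (hφ : ∀ u s θ : ℝ, φ (u, s, θ) = (u, s, ψ (u * s / 2, θ))) :
    ∀ p v : ℝ × ℝ × ℝ,
      (1 / 2) * ((φ p).1 * (fderiv ℝ φ p v).2.1 - (φ p).2.1 * (fderiv ℝ φ p v).1)
          + g (φ p).2.2 * (fderiv ℝ φ p v).2.2
        = p.1 * v.2.1 + g p.2.2 * v.2.2 := by
  have hψd : Differentiable ℝ ψ := hψ.differentiable (by norm_num)
  obtain ⟨G, hG⟩ : ∃ G : ℝ → ℝ, ∀ x, HasDerivAt G (g x) x :=
    ⟨_, fun x => (hg.continuous.integral_hasStrictDerivAt 0 x).hasDerivAt⟩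
  have hGψ : ∀ q : ℝ × ℝ, G (ψ q) = G q.2 + q.1 := fun ⟨c, θ⟩ => by
    simpa only [hψ0] using antideriv_comp_eq_add_of_hasDerivAt_one_div hG
      (fun c => (hgpos (ψ (c, θ))).ne')
      (fun c => hψc c θ ▸ (hψd (c, θ)).hasDerivAt_partial_fst) c
  obtain rfl : φ = fun q => (q.1, q.2.1, ψ (q.1 * q.2.1 / 2, q.2.2)) := funext fun q => hφ _ _ _
  rintro ⟨u, s, θ⟩ v
  rw [fderiv_normalForm_apply hψd]
  dsimp only
  rw [mul_fderiv_eq_of_antideriv_comp_eq_add hG hGψ (hψd _)]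
  ring
end

section
/- Let δ > 0 and let h : ℝ → ℝ be continuously differentiable with h(r) > 0 and h'(r) < 0 for all r ∈ (0, δ]. On U = {(r,φ,θ) ∈ ℝ³ : 0 < r ≤ δ} define the 1-form α by α_(r,φ,θ)(v) = h(r)((1/2) r² v_φ + v_θ). Then the vector field R(r,φ,θ) = (0, −h'(r)/(r h(r)²), (r h(r) + (1/2) r² h'(r))/(r h(r)²)) satisfies α_p(R(p)) = 1 and (dα)_p(R(p), v) = 0 for every p ∈ U and every v ∈ ℝ³; moreover, for each p ∈ U, R(p) is the unique vector satisfying these two conditions, and the φ-component of R(p) is strictly positive. -/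
/-!
Writing `α = F(r) dφ + h(r) dθ` with `F(r) = h(r) r² / 2` gives
`dα = F'(r) dr ∧ dφ + h'(r) dr ∧ dθ`. Since `h' ≠ 0`, the kernel of `dα` consists of the
vectors with `v_r = 0` and `F'(r) v_φ + h'(r) v_θ = 0`; together with `α(v) = 1` this is a
`2 × 2` linear system in `(v_φ, v_θ)` of determinant `-r h(r)²`, whose unique solution is `R`.
Its `φ`-component `-h'(r) / (r h(r)²)` is positive because `h' < 0`.
-/

/-- The exterior derivative of a 1-form `α` on `ℝ³`, represented as a map
`ℝ³ → (ℝ³ →L[ℝ] ℝ)`: `(dα)_p(v,w) = (Dα(p)v)(w) − (Dα(p)w)(v)`. -/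
noncomputable def extDerivOneForm (α : ℝ × ℝ × ℝ → (ℝ × ℝ × ℝ →L[ℝ] ℝ))
    (p v w : ℝ × ℝ × ℝ) : ℝ :=
  fderiv ℝ α p v w - fderiv ℝ α p w v

open ContinuousLinearMap

theorem extDerivOneForm_smul_add_smul {f g : ℝ × ℝ × ℝ → ℝ} {p : ℝ × ℝ × ℝ}
    (hf : DifferentiableAt ℝ f p) (hg : DifferentiableAt ℝ g p) (L M : ℝ × ℝ × ℝ →L[ℝ] ℝ)
    (v w : ℝ × ℝ × ℝ) :
    extDerivOneForm (fun q ↦ f q • L + g q • M) p v w =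
      (fderiv ℝ f p v * L w - fderiv ℝ f p w * L v) +
        (fderiv ℝ g p v * M w - fderiv ℝ g p w * M v) := by
  rw [extDerivOneForm,
    ((hf.hasFDerivAt.smul_const L).fun_add (hg.hasFDerivAt.smul_const M)).fderiv]
  simp only [add_apply, smulRight_apply, smul_apply, smul_eq_mul]
  ring

theorem fderiv_comp_fst_apply {F : ℝ → ℝ} {p : ℝ × ℝ × ℝ} (hF : DifferentiableAt ℝ F p.1)
    (v : ℝ × ℝ × ℝ) : fderiv ℝ (fun q : ℝ × ℝ × ℝ ↦ F q.1) p v = deriv F p.1 * v.1 := by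
  have hD : HasFDerivAt (fun q : ℝ × ℝ × ℝ ↦ F q.1) (deriv F p.1 • fst ℝ ℝ (ℝ × ℝ)) p :=
    hF.hasDerivAt.comp_hasFDerivAt p hasFDerivAt_fst
  simp [hD.fderiv]

-- Points of `ℝ × ℝ × ℝ` are read as `(r, φ, θ)`.
noncomputable def dPhi : ℝ × ℝ × ℝ →L[ℝ] ℝ := (fst ℝ ℝ ℝ).comp (snd ℝ ℝ (ℝ × ℝ))

noncomputable def dTheta : ℝ × ℝ × ℝ →L[ℝ] ℝ := (snd ℝ ℝ ℝ).comp (snd ℝ ℝ (ℝ × ℝ))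

theorem extDerivOneForm_model {h : ℝ → ℝ} {α : ℝ × ℝ × ℝ → (ℝ × ℝ × ℝ →L[ℝ] ℝ)}
    (hα : ∀ p v : ℝ × ℝ × ℝ, α p v = h p.1 * ((1 / 2) * p.1 ^ 2 * v.2.1 + v.2.2))
    {p : ℝ × ℝ × ℝ} (hh : DifferentiableAt ℝ h p.1) (v w : ℝ × ℝ × ℝ) :
    extDerivOneForm α p v w =
      (deriv h p.1 * ((1 / 2) * p.1 ^ 2) + h p.1 * p.1) * (v.1 * w.2.1 - w.1 * v.2.1) +
        deriv h p.1 * (v.1 * w.2.2 - w.1 * v.2.2) := by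
  set F : ℝ → ℝ := fun s ↦ h s * ((1 / 2) * s ^ 2)
  have hF : HasDerivAt F (deriv h p.1 * ((1 / 2) * p.1 ^ 2) + h p.1 * p.1) p.1 := by
    exact (hh.hasDerivAt.fun_mul ((hasDerivAt_pow 2 p.1).const_mul (1 / 2 : ℝ))).congr_deriv
      (by ring)
  have hα' : α = fun q ↦ F q.1 • dPhi + h q.1 • dTheta := by
    refine funext fun q ↦ ContinuousLinearMap.ext fun u ↦ ?_
    simp only [hα, F, dPhi, dTheta, add_apply, smul_apply, coe_comp, Function.comp_apply,
      coe_fst', coe_snd', smul_eq_mul]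
    ring
  have hFq : DifferentiableAt ℝ (fun q : ℝ × ℝ × ℝ ↦ F q.1) p :=
    hF.differentiableAt.comp p differentiableAt_fst
  have hhq : DifferentiableAt ℝ (fun q : ℝ × ℝ × ℝ ↦ h q.1) p :=
    hh.comp p differentiableAt_fst
  rw [hα', extDerivOneForm_smul_add_smul hFq hhq, fderiv_comp_fst_apply hF.differentiableAt,
    fderiv_comp_fst_apply hF.differentiableAt, fderiv_comp_fst_apply hh,
    fderiv_comp_fst_apply hh, hF.deriv]
  simp only [dPhi, dTheta, coe_comp, Function.comp_apply, coe_fst', coe_snd']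
  ring

def IsReebVector (α : ℝ × ℝ × ℝ → (ℝ × ℝ × ℝ →L[ℝ] ℝ)) (p v : ℝ × ℝ × ℝ) : Prop :=
  α p v = 1 ∧ ∀ w : ℝ × ℝ × ℝ, extDerivOneForm α p v w = 0

theorem forall_model_twoForm_eq_zero_iff {A b : ℝ} (hb : b ≠ 0) (v : ℝ × ℝ × ℝ) :
    (∀ w : ℝ × ℝ × ℝ, A * (v.1 * w.2.1 - w.1 * v.2.1) + b * (v.1 * w.2.2 - w.1 * v.2.2) = 0) ↔
      v.1 = 0 ∧ A * v.2.1 + b * v.2.2 = 0 := by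
  constructor
  · intro hv
    have hwθ := hv (0, 0, 1)
    have hwr := hv (1, 0, 0)
    simp only [mul_zero, mul_one, zero_mul, sub_zero, zero_sub, one_mul] at hwθ hwr
    have hv1 : v.1 = 0 := by simpa [hb] using hwθ
    exact ⟨hv1, by linarith⟩
  · rintro ⟨hv1, hv⟩ w
    rw [hv1]
    linear_combination (-w.1) * hv

theorem model_reebSystem_iff {r a b : ℝ} (hr : r ≠ 0) (ha : a ≠ 0) (x y : ℝ) :
    (a * ((1 / 2) * r ^ 2 * x + y) = 1 ∧ (b * ((1 / 2) * r ^ 2) + a * r) * x + b * y = 0) ↔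
      x = -b / (r * a ^ 2) ∧ y = (r * a + (1 / 2) * r ^ 2 * b) / (r * a ^ 2) := by
  have hra : r * a ^ 2 ≠ 0 := by positivity
  constructor
  · rintro ⟨hα, hdα⟩
    have hx : r * a ^ 2 * x = -b := by linear_combination a * hdα - b * hα
    refine ⟨by rw [eq_div_iff hra]; linarith, ?_⟩
    rw [eq_div_iff hra]
    linear_combination r * a * hα - ((1 / 2) * r ^ 2) * hx
  · rintro ⟨rfl, rfl⟩
    constructor <;> field_simp <;> ring

theorem isReebVector_model_iff {h : ℝ → ℝ} {α : ℝ × ℝ × ℝ → (ℝ × ℝ × ℝ →L[ℝ] ℝ)}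
    (hα : ∀ p v : ℝ × ℝ × ℝ, α p v = h p.1 * ((1 / 2) * p.1 ^ 2 * v.2.1 + v.2.2))
    {p : ℝ × ℝ × ℝ} (hr : p.1 ≠ 0) (hh : h p.1 ≠ 0) (hh' : deriv h p.1 ≠ 0)
    (v : ℝ × ℝ × ℝ) :
    IsReebVector α p v ↔ v = (0, -(deriv h p.1) / (p.1 * (h p.1) ^ 2),
        (p.1 * h p.1 + (1 / 2) * p.1 ^ 2 * deriv h p.1) / (p.1 * (h p.1) ^ 2)) := by
  simp only [IsReebVector, hα, extDerivOneForm_model hα (differentiableAt_of_deriv_ne_zero hh'),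
    forall_model_twoForm_eq_zero_iff hh', Prod.ext_iff, ← model_reebSystem_iff hr hh]
  tauto

theorem reeb_vector_field_of_model_form_general
    (δ : ℝ)
    (h : ℝ → ℝ)
    (hpos : ∀ r ∈ Set.Ioc (0 : ℝ) δ, 0 < h r)
    (hneg : ∀ r ∈ Set.Ioc (0 : ℝ) δ, deriv h r < 0)
    (α : ℝ × ℝ × ℝ → (ℝ × ℝ × ℝ →L[ℝ] ℝ))
    (hα : ∀ p v : ℝ × ℝ × ℝ, α p v = h p.1 * ((1 / 2) * p.1 ^ 2 * v.2.1 + v.2.2))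
    (R : ℝ × ℝ × ℝ → ℝ × ℝ × ℝ)
    (hR : ∀ p : ℝ × ℝ × ℝ,
      R p = (0, -(deriv h p.1) / (p.1 * (h p.1) ^ 2),
        (p.1 * h p.1 + (1 / 2) * p.1 ^ 2 * deriv h p.1) / (p.1 * (h p.1) ^ 2))) :
    ∀ p : ℝ × ℝ × ℝ, p.1 ∈ Set.Ioc (0 : ℝ) δ →
      α p (R p) = 1 ∧
      (∀ v : ℝ × ℝ × ℝ, extDerivOneForm α p (R p) v = 0) ∧
      (∀ v' : ℝ × ℝ × ℝ,
        (α p v' = 1 ∧ ∀ v : ℝ × ℝ × ℝ, extDerivOneForm α p v' v = 0) → v' = R p) ∧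
      0 < (R p).2.1 := by
  intro p hp
  have hr : 0 < p.1 := hp.1
  have hh : 0 < h p.1 := hpos p.1 hp
  have hh' : deriv h p.1 < 0 := hneg p.1 hp
  have hReeb := isReebVector_model_iff hα hr.ne' hh.ne' hh'.ne
  have hRReeb : IsReebVector α p (R p) := (hReeb (R p)).2 (hR p)
  refine ⟨hRReeb.1, hRReeb.2, fun v hv ↦ ((hReeb v).1 hv).trans (hR p).symm, ?_⟩
  rw [hR]
  exact div_pos (neg_pos.2 hh') (by positivity)

/-- For the model contact form `α = h(r)((1/2) r² dφ + dθ)` on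
`U = {0 < r ≤ δ}` with `h > 0`, `h' < 0`, the displayed vector field `R` is its Reeb
vector field (`α(R)=1`, `dα(R,·)=0`), it is the unique such vector at each point, and
its `φ`-component is strictly positive. -/
theorem reeb_vector_field_of_model_form
    (δ : ℝ) (hδ : 0 < δ)
    (h : ℝ → ℝ) (hh : ContDiff ℝ 1 h)
    (hpos : ∀ r ∈ Set.Ioc (0 : ℝ) δ, 0 < h r)
    (hneg : ∀ r ∈ Set.Ioc (0 : ℝ) δ, deriv h r < 0)
    (α : ℝ × ℝ × ℝ → (ℝ × ℝ × ℝ →L[ℝ] ℝ))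
    (hα : ∀ p v : ℝ × ℝ × ℝ, α p v = h p.1 * ((1 / 2) * p.1 ^ 2 * v.2.1 + v.2.2))
    (R : ℝ × ℝ × ℝ → ℝ × ℝ × ℝ)
    (hR : ∀ p : ℝ × ℝ × ℝ,
      R p = (0, -(deriv h p.1) / (p.1 * (h p.1) ^ 2),
        (p.1 * h p.1 + (1 / 2) * p.1 ^ 2 * deriv h p.1) / (p.1 * (h p.1) ^ 2))) :
    ∀ p : ℝ × ℝ × ℝ, p.1 ∈ Set.Ioc (0 : ℝ) δ →
      α p (R p) = 1 ∧
      (∀ v : ℝ × ℝ × ℝ, extDerivOneForm α p (R p) v = 0) ∧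
      (∀ v' : ℝ × ℝ × ℝ,
        (α p v' = 1 ∧ ∀ v : ℝ × ℝ × ℝ, extDerivOneForm α p v' v = 0) → v' = R p) ∧
      0 < (R p).2.1 :=
  reeb_vector_field_of_model_form_general δ h hpos hneg α hα R hR
end

section
/- Let δ > 0 and let h : ℝ → ℝ be continuously differentiable with h(r) > 0 and h'(r) < 0 for all r ∈ (0, δ]. On U = {(r,φ,θ) ∈ ℝ³ : 0 < r ≤ δ} let R(r,φ,θ) = (0, −h'(r)/(r h(r)²), (r h(r) + (1/2) r² h'(r))/(r h(r)²)), the Reeb vector field of the contact form h(r)((1/2) r² dφ + dθ). Then for every differentiable curve c : I → U defined on a real interval I with c'(s) = R(c(s)) for all s ∈ I, the φ-coordinate of c is strictly increasing on I; consequently c is injective, and in particular R admits no nonconstant periodic integral curve. -/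
/-! The `φ`-component `-h'(r) / (r h(r)²)` of the Reeb field is positive wherever `h > 0` and
`h' < 0`, so `φ` strictly increases along every integral curve; a curve with a strictly
monotone coordinate never returns to a point it has visited. -/

section ProdDeriv

variable {𝕜 E F : Type*} [NontriviallyNormedField 𝕜] [NormedAddCommGroup E] [NormedSpace 𝕜 E]
  [NormedAddCommGroup F] [NormedSpace 𝕜 F] {f : 𝕜 → E × F} {f' : E × F} {s : Set 𝕜} {x : 𝕜}

theorem HasDerivWithinAt.fst (hf : HasDerivWithinAt f f' s x) :
    HasDerivWithinAt (fun t => (f t).1) f'.1 s x :=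
  (hasFDerivAt_fst (p := f x)).comp_hasDerivWithinAt x hf

theorem HasDerivWithinAt.snd (hf : HasDerivWithinAt f f' s x) :
    HasDerivWithinAt (fun t => (f t).2) f'.2 s x :=
  (hasFDerivAt_snd (p := f x)).comp_hasDerivWithinAt x hf

end ProdDeriv

theorem Set.OrdConnected.strictMonoOn_of_hasDerivWithinAt_pos {I : Set ℝ} (hI : I.OrdConnected)
    {f f' : ℝ → ℝ} (hf : ∀ x ∈ I, HasDerivWithinAt f (f' x) I x) (hf' : ∀ x ∈ I, 0 < f' x) :
    StrictMonoOn f I :=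
  _root_.strictMonoOn_of_hasDerivWithinAt_pos hI.convex (fun x hx => (hf x hx).continuousWithinAt)
    (fun x hx => (hf x (interior_subset hx)).mono interior_subset)
    (fun x hx => hf' x (interior_subset hx))

theorem reeb_flow_has_no_periodic_orbit_general
    (δ : ℝ)
    (h : ℝ → ℝ)
    (hpos : ∀ r ∈ Set.Ioc (0 : ℝ) δ, 0 < h r)
    (hneg : ∀ r ∈ Set.Ioc (0 : ℝ) δ, deriv h r < 0)
    (R : ℝ × ℝ × ℝ → ℝ × ℝ × ℝ)
    (hR : ∀ p : ℝ × ℝ × ℝ,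
      R p = (0, -(deriv h p.1) / (p.1 * (h p.1) ^ 2),
        (p.1 * h p.1 + (1 / 2) * p.1 ^ 2 * deriv h p.1) / (p.1 * (h p.1) ^ 2)))
    (I : Set ℝ) (hI : I.OrdConnected)
    (c : ℝ → ℝ × ℝ × ℝ)
    (hcU : ∀ s ∈ I, (c s).1 ∈ Set.Ioc (0 : ℝ) δ)
    (hc : ∀ s ∈ I, HasDerivWithinAt c (R (c s)) I s) :
    StrictMonoOn (fun s => (c s).2.1) I ∧
    Set.InjOn c I ∧
    ∀ T : ℝ, 0 < T → ∀ s : ℝ, s ∈ I → s + T ∈ I → c (s + T) ≠ c s := by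
  have hφ_deriv_pos : ∀ s ∈ I, 0 < (R (c s)).2.1 := fun s hs => by
    have hr := hcU s hs
    rw [hR]
    exact div_pos (neg_pos.2 (hneg _ hr)) (mul_pos hr.1 (pow_pos (hpos _ hr) 2))
  have hφ : StrictMonoOn (fun s => (c s).2.1) I :=
    hI.strictMonoOn_of_hasDerivWithinAt_pos (fun s hs => (hc s hs).snd.fst) hφ_deriv_pos
  have hinj : Set.InjOn c I := Set.InjOn.of_comp (g := fun p : ℝ × ℝ × ℝ => p.2.1) hφ.injOn
  refine ⟨hφ, hinj, fun T hT s hs hsT hperiod => ?_⟩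
  linarith [hinj hsT hs hperiod]

/-- For the Reeb vector field `R` of the model contact form
`h(r)((1/2) r² dφ + dθ)` on `U = {0 < r ≤ δ}` (with `h > 0`, `h' < 0`), the
`φ`-coordinate of any integral curve is strictly increasing; hence every integral
curve is injective and, in particular, `R` has no nonconstant periodic integral
curve. -/
theorem reeb_flow_has_no_periodic_orbit
    (δ : ℝ) (hδ : 0 < δ)
    (h : ℝ → ℝ) (hh : ContDiff ℝ 1 h)
    (hpos : ∀ r ∈ Set.Ioc (0 : ℝ) δ, 0 < h r)
    (hneg : ∀ r ∈ Set.Ioc (0 : ℝ) δ, deriv h r < 0)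
    (R : ℝ × ℝ × ℝ → ℝ × ℝ × ℝ)
    (hR : ∀ p : ℝ × ℝ × ℝ,
      R p = (0, -(deriv h p.1) / (p.1 * (h p.1) ^ 2),
        (p.1 * h p.1 + (1 / 2) * p.1 ^ 2 * deriv h p.1) / (p.1 * (h p.1) ^ 2)))
    (I : Set ℝ) (hI : I.OrdConnected)
    (c : ℝ → ℝ × ℝ × ℝ)
    (hcU : ∀ s ∈ I, (c s).1 ∈ Set.Ioc (0 : ℝ) δ)
    (hc : ∀ s ∈ I, HasDerivWithinAt c (R (c s)) I s) :
    StrictMonoOn (fun s => (c s).2.1) I ∧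
    Set.InjOn c I ∧
    ∀ T : ℝ, 0 < T → ∀ s : ℝ, s ∈ I → s + T ∈ I → c (s + T) ≠ c s :=
  reeb_flow_has_no_periodic_orbit_general δ h hpos hneg R hR I hI c hcU hc
end
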